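/- arXiv:1210.6367 — 2 statements merged into one kernel-verified Lean document; each statement's English description precedes it below -/
import Mathlib

section
/- Let p(x, y₁,…,y_k | a, b₁,…,b_k) be a non-signaling conditional probability distribution which is invariant under simultaneous permutations of the pairs (y_j, b_j), with all y_j in alphabet Y, and let μ be a probability distribution on the input set A of the first system. Then for every fixed choice of inputs b₁,…,b_{k−1}: max over b_k ∈ B of E_{a∼μ} I(X : Y_k | Y₁…Y_{k−1}) evaluated in p(·|a, b₁,…,b_k) is at least (1/2) · [ min over q ∈ LHV of max over b ∈ B of E_{a∼μ} ‖ p(X, Y_k | a, b) − q(X, Y_k | a, b) ‖₁ ]², where p(X, Y_k | a, b) denotes the marginal of p on systems (X, Y_k) with input b on system k (well-defined by the non-signaling property). -/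
open scoped BigOperators

noncomputable section

/-! ### Auxiliary scalar lemmas (Pinsker) -/

private lemma log_lb {t : ℝ} (ht : 0 < t) : 1 - 1/t ≤ Real.log t := by
  have h := Real.log_le_sub_one_of_pos (x := t⁻¹) (by positivity)
  rw [Real.log_inv] at h
  rw [one_div]
  linarith

private def gaux (t : ℝ) : ℝ := (t+1) * Real.log t - 2*t + 2

private lemma gaux_deriv {t : ℝ} (ht : 0 < t) :
    HasDerivAt gaux (Real.log t + 1/t - 1) t := by
  have h1 : HasDerivAt (fun t : ℝ => (t+1) * Real.log t)
      (1 * Real.log t + (t+1) * t⁻¹) t :=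
    ((hasDerivAt_id t).add_const 1).mul (Real.hasDerivAt_log (ne_of_gt ht))
  have h2 : HasDerivAt gaux (1 * Real.log t + (t+1) * t⁻¹ - 2*1) t :=
    (h1.sub ((hasDerivAt_id t).const_mul 2)).add_const 2
  convert h2 using 1
  field_simp
  ring

private lemma gaux_mono : MonotoneOn gaux (Set.Ioi (0:ℝ)) := by
  apply monotoneOn_of_deriv_nonneg (convex_Ioi 0)
  · intro x hx
    exact (gaux_deriv hx).continuousAt.continuousWithinAt
  · intro x hx
    rw [interior_Ioi] at hx
    exact (gaux_deriv hx).differentiableAt.differentiableWithinAt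
  · intro x hx
    rw [interior_Ioi] at hx
    rw [(gaux_deriv hx).deriv]
    have := log_lb hx
    linarith

private lemma gaux_one : gaux 1 = 0 := by simp [gaux]

private def haux (t : ℝ) : ℝ := 2*(t+2)*(t*Real.log t - t + 1) - 3*(t-1)^2

private lemma haux_deriv {t : ℝ} (ht : 0 < t) :
    HasDerivAt haux (4 * gaux t) t := by
  have h1 : HasDerivAt (fun t : ℝ => t * Real.log t - t + 1)
      (Real.log t + 1 - 1) t :=
    ((Real.hasDerivAt_mul_log (ne_of_gt ht)).sub (hasDerivAt_id t)).add_const 1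
  have h2 : HasDerivAt (fun t : ℝ => 2*(t+2)) (2*1) t :=
    (((hasDerivAt_id t).add_const 2).const_mul 2)
  have h3 : HasDerivAt (fun t : ℝ => (t-1)^2) (2 * (t-1)^1 * 1) t :=
    ((hasDerivAt_id t).sub_const 1).pow 2
  have h4 := (h2.mul h1).sub (h3.const_mul 3)
  refine h4.congr_deriv ?_
  simp [gaux]
  ring

private lemma haux_one : haux 1 = 0 := by simp [haux]

private lemma haux_cont : Continuous haux := by
  have : Continuous fun t : ℝ => t * Real.log t := Real.continuous_mul_log
  unfold haux
  fun_prop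

private lemma haux_nonneg {t : ℝ} (ht : 0 ≤ t) : 0 ≤ haux t := by
  rcases le_or_gt t 1 with h1 | h1
  · have hanti : AntitoneOn haux (Set.Icc (0:ℝ) 1) := by
      apply antitoneOn_of_deriv_nonpos (convex_Icc 0 1) haux_cont.continuousOn
      · intro x hx
        rw [interior_Icc] at hx
        exact (haux_deriv hx.1).differentiableAt.differentiableWithinAt
      · intro x hx
        rw [interior_Icc] at hx
        rw [(haux_deriv hx.1).deriv]
        have : gaux x ≤ gaux 1 := gaux_mono hx.1 (by norm_num) hx.2.le
        rw [gaux_one] at this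
        linarith
    have := hanti ⟨ht, h1⟩ (by norm_num : (1:ℝ) ∈ Set.Icc (0:ℝ) 1) h1
    rwa [haux_one] at this
  · have hmono : MonotoneOn haux (Set.Ici (1:ℝ)) := by
      apply monotoneOn_of_deriv_nonneg (convex_Ici 1) haux_cont.continuousOn
      · intro x hx
        rw [interior_Ici] at hx
        exact (haux_deriv (by linarith [Set.mem_Ioi.mp hx])).differentiableAt.differentiableWithinAt
      · intro x hx
        rw [interior_Ici] at hx
        have hx1 : (1:ℝ) < x := hx
        rw [(haux_deriv (by linarith)).deriv]
        have : gaux 1 ≤ gaux x := gaux_mono (by norm_num) (by simp; linarith) hx1.le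
        rw [gaux_one] at this
        linarith
    have := hmono (by norm_num : (1:ℝ) ∈ Set.Ici (1:ℝ)) (Set.mem_Ici.mpr h1.le) h1.le
    rwa [haux_one] at this

private lemma key_ineq {t : ℝ} (ht : 0 ≤ t) :
    3*(t-1)^2 ≤ 2*(t+2)*(t*Real.log t - t + 1) := by
  have := haux_nonneg ht
  unfold haux at this
  linarith

private lemma pt_ineq {u v : ℝ} (hu : 0 ≤ u) (hv : 0 < v) :
    u - v + 3*(u-v)^2/(2*(u+2*v)) ≤ u * Real.log (u/v) := by
  set t := u / v with htdef
  have ht : 0 ≤ t := div_nonneg hu hv.le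
  have hu' : u = t * v := by rw [htdef, div_mul_cancel₀ _ hv.ne']
  have key := key_ineq ht
  have hpos : 0 < t + 2 := by linarith
  have h2 : 3*(t-1)^2/(2*(t+2)) ≤ t*Real.log t - t + 1 := by
    rw [div_le_iff₀ (by linarith)]
    linarith
  have hd : 3*(u-v)^2/(2*(u+2*v)) = v * (3*(t-1)^2/(2*(t+2))) := by
    have h2' : u + 2*v = v*(t+2) := by rw [hu']; ring
    have h3' : u - v = v*(t-1) := by rw [hu']; ring
    rw [h2', h3']
    have h4' : (0:ℝ) < t + 2 := hpos
    field_simp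
  calc u - v + 3*(u-v)^2/(2*(u+2*v))
      = v * (t - 1 + 3*(t-1)^2/(2*(t+2))) := by rw [hd, hu']; ring
    _ ≤ v * (t * Real.log t) := by
        apply mul_le_mul_of_nonneg_left _ hv.le
        linarith
    _ = u * Real.log (u/v) := by rw [← htdef, hu']; ring

/-- Pinsker's inequality, unnormalized version with equal masses. -/
private lemma pinsker_sum {ι : Type*} [Fintype ι] (u v : ι → ℝ)
    (hu : ∀ i, 0 ≤ u i) (hv : ∀ i, 0 ≤ v i)
    (hsum : (∑ i, u i) = ∑ i, v i)
    (hdom : ∀ i, v i = 0 → u i = 0) :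
    (∑ i, |u i - v i|)^2 ≤ 2 * (∑ i, u i) * ∑ i, u i * Real.log (u i / v i) := by
  set D : ι → ℝ := fun i => 3*(u i - v i)^2/(2*(u i + 2*v i)) with hD
  have hD0 : ∀ i, 0 ≤ D i := fun i => by
    apply div_nonneg (by positivity)
    have := hu i; have := hv i; linarith
  have hKL : (∑ i, D i) ≤ ∑ i, u i * Real.log (u i / v i) := by
    have h1 : ∀ i, u i - v i + D i ≤ u i * Real.log (u i / v i) := by
      intro i
      rcases eq_or_lt_of_le (hv i) with h | h
      · have hu0 : u i = 0 := hdom i h.symm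
        simp [hD, hu0, ← h]
      · exact pt_ineq (hu i) h
    calc (∑ i, D i) = ∑ i, (u i - v i) + ∑ i, D i := by
          rw [Finset.sum_sub_distrib, hsum]; ring
      _ = ∑ i, (u i - v i + D i) := by rw [Finset.sum_add_distrib]
      _ ≤ _ := Finset.sum_le_sum fun i _ => h1 i
  have hCS := Finset.sum_mul_sq_le_sq_mul_sq Finset.univ
      (fun i => Real.sqrt (D i)) (fun i => Real.sqrt (2*(u i + 2*v i)/3))
  have hfg : ∀ i, Real.sqrt (D i) * Real.sqrt (2*(u i + 2*v i)/3) = |u i - v i| := by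
    intro i
    rw [← Real.sqrt_mul (hD0 i)]
    rcases eq_or_lt_of_le (add_nonneg (hu i) (mul_nonneg two_pos.le (hv i))) with h | h
    · have h1 : u i = 0 := by have := hu i; have := hv i; linarith
      have h2 : v i = 0 := by have := hu i; have := hv i; linarith
      simp [hD, h1, h2]
    · have heq : D i * (2*(u i + 2*v i)/3) = (u i - v i)^2 := by
        have hne := h.ne'
        rw [hD]
        field_simp
        exact mul_div_cancel_right₀ _ (by intro h'; linarith)
      rw [heq, Real.sqrt_sq_eq_abs]
  have hs1 : ∀ i, (Real.sqrt (D i))^2 = D i := fun i => Real.sq_sqrt (hD0 i)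
  have hs2 : ∀ i, (Real.sqrt (2*(u i + 2*v i)/3))^2 = 2*(u i + 2*v i)/3 := by
    intro i
    apply Real.sq_sqrt
    have := hu i; have := hv i; linarith
  simp only [hfg, hs1, hs2] at hCS
  have hmass : (∑ i, 2*(u i + 2*v i)/3) = 2 * (∑ i, u i) := by
    rw [← Finset.sum_div, ← Finset.mul_sum, Finset.sum_add_distrib, ← Finset.mul_sum, ← hsum]
    ring
  rw [hmass] at hCS
  calc (∑ i, |u i - v i|)^2 ≤ (∑ i, D i) * (2 * (∑ i, u i)) := hCS
    _ ≤ (∑ i, u i * Real.log (u i / v i)) * (2 * (∑ i, u i)) := by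
        apply mul_le_mul_of_nonneg_right hKL
        have : 0 ≤ ∑ i, u i := Finset.sum_nonneg fun i _ => hu i
        linarith
    _ = 2 * (∑ i, u i) * ∑ i, u i * Real.log (u i / v i) := by ring

/-! ### Reindexing sums over tuples -/

private def snocEquivT (Y : Type) (k : ℕ) : ((Fin k → Y) × Y) ≃ (Fin (k+1) → Y) where
  toFun p := Fin.snoc p.1 p.2
  invFun f := (Fin.init f, f (Fin.last k))
  left_inv p := by simp
  right_inv f := Fin.snoc_init_self f

private lemma sum_snoc {Y : Type} [Fintype Y] {k : ℕ} (f : (Fin (k+1) → Y) → ℝ) :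
    (∑ yv, f yv) = ∑ g : Fin k → Y, ∑ y : Y, f (Fin.snoc g y) := by
  have h := Fintype.sum_equiv (snocEquivT Y k)
      (fun p : (Fin k → Y) × Y => f (Fin.snoc p.1 p.2)) f (fun p => rfl)
  rw [← h, Fintype.sum_prod_type]


/-- Non-signaling for a conditional distribution on one X-system and k Y-systems. -/
def IsNonSignalingExt {X Y A B : Type} [Fintype X] [Fintype Y] {k : ℕ}
    (P : X → (Fin k → Y) → A → (Fin k → B) → ℝ) : Prop :=
  (∀ (yv : Fin k → Y) (a a' : A) (bv : Fin k → B),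
      (∑ x, P x yv a bv) = ∑ x, P x yv a' bv) ∧
  (∀ (j : Fin k) (x : X) (yv : Fin k → Y) (a : A) (bv : Fin k → B) (b' : B),
      (∑ c : Y, P x (Function.update yv j c) a bv) =
        ∑ c : Y, P x (Function.update yv j c) a (Function.update bv j b'))

/-- The conditional mutual information I(X : Y_last | Y₁…Y_{k'}) of the joint output
    distribution `D` on X × Y^{k'+1} (natural logarithm). -/
noncomputable def cmiLast {X Y : Type} [Fintype X] [Fintype Y] {k' : ℕ}
    (D : X → (Fin (k' + 1) → Y) → ℝ) : ℝ :=
  ∑ x : X, ∑ yv : Fin (k' + 1) → Y,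
    D x yv * Real.log
      (D x yv * (∑ x' : X, ∑ c : Y, D x' (Function.update yv (Fin.last k') c)) /
        ((∑ c : Y, D x (Function.update yv (Fin.last k') c)) *
          (∑ x' : X, D x' yv)))

/-- The marginal p(x, y_k | a, b_k) of the extension, with the first k' inputs fixed
    to `brest` (well-defined independently of them by non-signaling). -/
noncomputable def margLast {X Y A B : Type} [Fintype Y] {k' : ℕ}
    (P : X → (Fin (k' + 1) → Y) → A → (Fin (k' + 1) → B) → ℝ)
    (brest : Fin k' → B) (x : X) (y : Y) (a : A) (b : B) : ℝ :=
  ∑ g : Fin k' → Y, P x (Fin.snoc g y) a (Fin.snoc brest b)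

set_option maxHeartbeats 2000000 in
theorem mutual_information_vs_LHV_distance
    {X Y A B : Type} [Fintype X] [Fintype Y] [Fintype A] [Fintype B]
    [DecidableEq X] [DecidableEq Y] [Nonempty B]
    {k' : ℕ}
    (P : X → (Fin (k' + 1) → Y) → A → (Fin (k' + 1) → B) → ℝ)
    (hP0 : ∀ x yv a bv, 0 ≤ P x yv a bv)
    (hP1 : ∀ a bv, (∑ x, ∑ yv : Fin (k' + 1) → Y, P x yv a bv) = 1)
    (hns : IsNonSignalingExt P)
    (hsym : ∀ (π : Equiv.Perm (Fin (k' + 1))) (x : X) (yv : Fin (k' + 1) → Y) (a : A)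
        (bv : Fin (k' + 1) → B), P x (yv ∘ π) a (bv ∘ π) = P x yv a bv)
    (μ : A → ℝ) (hμ0 : ∀ a, 0 ≤ μ a) (hμ1 : (∑ a, μ a) = 1)
    (brest : Fin k' → B) :
    (1 / 2) *
      (sInf {t : ℝ | ∃ (N : ℕ) (w : Fin N → ℝ) (q : Fin N → A → X → ℝ)
          (r : Fin N → B → Y → ℝ),
          (∀ i, 0 ≤ w i) ∧ (∑ i, w i) = 1 ∧
          (∀ i a x, 0 ≤ q i a x) ∧ (∀ i a, (∑ x, q i a x) = 1) ∧
          (∀ i b y, 0 ≤ r i b y) ∧ (∀ i b, (∑ y, r i b y) = 1) ∧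
          t = ⨆ b : B, ∑ a, μ a * ∑ x, ∑ y,
            |margLast P brest x y a b - ∑ i, w i * q i a x * r i b y|}) ^ 2 ≤
    ⨆ bk : B, ∑ a, μ a *
      cmiLast (fun x yv => P x yv a (Fin.snoc brest bk)) := by
  classical
  obtain ⟨hns1, hns2⟩ := hns
  have hAne : Nonempty A := by
    by_contra h
    rw [not_nonempty_iff] at h
    simp at hμ1
  obtain ⟨a₀⟩ := hAne
  obtain ⟨b₀⟩ := (inferInstance : Nonempty B)
  have hXne : Nonempty X := by
    by_contra h
    rw [not_nonempty_iff] at h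
    have := hP1 a₀ (fun _ => b₀)
    simp at this
  haveI := hXne
  have hYne : Nonempty Y := by
    by_contra h
    rw [not_nonempty_iff] at h
    have := hP1 a₀ (fun _ => b₀)
    simp at this
  haveI := hYne
  obtain ⟨y₀⟩ := hYne
  -- abbreviate the LHV set
  set Sset : Set ℝ := {t : ℝ | ∃ (N : ℕ) (w : Fin N → ℝ) (q : Fin N → A → X → ℝ)
          (r : Fin N → B → Y → ℝ),
          (∀ i, 0 ≤ w i) ∧ (∑ i, w i) = 1 ∧
          (∀ i a x, 0 ≤ q i a x) ∧ (∀ i a, (∑ x, q i a x) = 1) ∧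
          (∀ i b y, 0 ≤ r i b y) ∧ (∀ i b, (∑ y, r i b y) = 1) ∧
          t = ⨆ b : B, ∑ a, μ a * ∑ x, ∑ y,
            |margLast P brest x y a b - ∑ i, w i * q i a x * r i b y|} with hSset
  -- basic update lemmas
  have hupdY : ∀ (g : Fin k' → Y) (y c : Y),
      Function.update (Fin.snoc g y : Fin (k'+1) → Y) (Fin.last k') c = Fin.snoc g c :=
    fun g y c => Fin.update_snoc_last _ _ _
  have hupdB : ∀ (b b' : B),
      Function.update (Fin.snoc brest b : Fin (k'+1) → B) (Fin.last k') b' =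
        Fin.snoc brest b' :=
    fun b b' => Fin.update_snoc_last _ _ _
  -- the hidden-variable weights and conditionals
  set m : (Fin k' → Y) → ℝ :=
    fun g => ∑ x, ∑ y, P x (Fin.snoc g y) a₀ (Fin.snoc brest b₀) with hm_def
  set Am : X → (Fin k' → Y) → A → ℝ :=
    fun x g a => ∑ c, P x (Fin.snoc g c) a (Fin.snoc brest b₀) with hAm_def
  set Bm : (Fin k' → Y) → Y → B → ℝ :=
    fun g y b => ∑ x, P x (Fin.snoc g y) a₀ (Fin.snoc brest b) with hBm_def
  -- non-signaling identities
  have hA_eq : ∀ x g a b, (∑ c, P x (Fin.snoc g c) a (Fin.snoc brest b)) = Am x g a := by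
    intro x g a b
    have h := hns2 (Fin.last k') x (Fin.snoc g y₀) a (Fin.snoc brest b) b₀
    simp only [hupdY, hupdB] at h
    simp only [hAm_def]
    exact h
  have hB_eq : ∀ g y a b, (∑ x, P x (Fin.snoc g y) a (Fin.snoc brest b)) = Bm g y b := by
    intro g y a b
    have h := hns1 (Fin.snoc g y) a a₀ (Fin.snoc brest b)
    simp only [hBm_def]
    exact h
  have hm_eq : ∀ g a b, (∑ x, ∑ y, P x (Fin.snoc g y) a (Fin.snoc brest b)) = m g := by
    intro g a b
    rw [Finset.sum_comm]
    rw [Finset.sum_congr rfl (fun y _ => hns1 (Fin.snoc g y) a a₀ (Fin.snoc brest b))]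
    rw [Finset.sum_comm]
    simp only [hm_def]
    exact Finset.sum_congr rfl fun x _ =>
      (hA_eq x g a₀ b).trans (hA_eq x g a₀ b₀).symm
  -- positivity and normalization
  have hm0 : ∀ g, 0 ≤ m g := by
    intro g
    simp only [hm_def]
    exact Finset.sum_nonneg fun x _ => Finset.sum_nonneg fun y _ => hP0 _ _ _ _
  have hAm0 : ∀ x g a, 0 ≤ Am x g a := by
    intro x g a
    simp only [hAm_def]
    exact Finset.sum_nonneg fun c _ => hP0 _ _ _ _
  have hBm0 : ∀ g y b, 0 ≤ Bm g y b := by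
    intro g y b
    simp only [hBm_def]
    exact Finset.sum_nonneg fun x _ => hP0 _ _ _ _
  have hmass : (∑ g, m g) = 1 := by
    have h := hP1 a₀ (Fin.snoc brest b₀)
    calc (∑ g, m g)
        = ∑ g : Fin k' → Y, ∑ x, ∑ y, P x (Fin.snoc g y) a₀ (Fin.snoc brest b₀) := by
          simp only [hm_def]
      _ = ∑ x, ∑ g : Fin k' → Y, ∑ y, P x (Fin.snoc g y) a₀ (Fin.snoc brest b₀) :=
          Finset.sum_comm
      _ = ∑ x, ∑ yv, P x yv a₀ (Fin.snoc brest b₀) :=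
          Finset.sum_congr rfl fun x _ =>
            (sum_snoc (fun yv => P x yv a₀ (Fin.snoc brest b₀))).symm
      _ = 1 := h
  have hAm_sum : ∀ g a, (∑ x, Am x g a) = m g := by
    intro g a
    calc (∑ x, Am x g a)
        = ∑ x, ∑ c, P x (Fin.snoc g c) a (Fin.snoc brest b₀) :=
          Finset.sum_congr rfl fun x _ => (hA_eq x g a b₀).symm
      _ = m g := hm_eq g a b₀
  have hBm_sum : ∀ g b, (∑ y, Bm g y b) = m g := by
    intro g b
    calc (∑ y, Bm g y b)
        = ∑ y, ∑ x, P x (Fin.snoc g y) a₀ (Fin.snoc brest b) :=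
          Finset.sum_congr rfl fun y _ => (hB_eq g y a₀ b).symm
      _ = ∑ x, ∑ y, P x (Fin.snoc g y) a₀ (Fin.snoc brest b) := Finset.sum_comm
      _ = m g := hm_eq g a₀ b
  have hP_le_Am : ∀ x g y a b, P x (Fin.snoc g y) a (Fin.snoc brest b) ≤ Am x g a := by
    intro x g y a b
    rw [← hA_eq x g a b]
    exact Finset.single_le_sum (fun c _ => hP0 _ _ _ _) (Finset.mem_univ y)
  have hP_le_Bm : ∀ x g y a b, P x (Fin.snoc g y) a (Fin.snoc brest b) ≤ Bm g y b := by
    intro x g y a b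
    rw [← hB_eq g y a b]
    exact Finset.single_le_sum
      (f := fun x' => P x' (Fin.snoc g y) a (Fin.snoc brest b))
      (fun x' _ => hP0 _ _ _ _) (Finset.mem_univ x)
  have hAm_le_m : ∀ x g a, Am x g a ≤ m g := by
    intro x g a
    rw [← hAm_sum g a]
    exact Finset.single_le_sum (f := fun x' => Am x' g a)
      (fun x' _ => hAm0 _ _ _) (Finset.mem_univ x)
  have hAm_zero : ∀ x g a, m g = 0 → Am x g a = 0 := fun x g a hg =>
    le_antisymm (hg ▸ hAm_le_m x g a) (hAm0 x g a)
  have hPzero : ∀ (g) (x : X) (y : Y) (a b), m g = 0 →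
      P x (Fin.snoc g y) a (Fin.snoc brest b) = 0 := by
    intro g x y a b hg
    refine le_antisymm ((hP_le_Am x g y a b).trans ?_) (hP0 _ _ _ _)
    rw [hAm_zero x g a hg]
  -- local hidden-variable responses
  have hcardX : (0:ℝ) < (Fintype.card X : ℝ) := by exact_mod_cast Fintype.card_pos
  have hcardY : (0:ℝ) < (Fintype.card Y : ℝ) := by exact_mod_cast Fintype.card_pos
  set qd : (Fin k' → Y) → A → X → ℝ :=
    fun g a x => if m g = 0 then ((Fintype.card X : ℝ))⁻¹ else Am x g a / m g with hqd_def
  set rd : (Fin k' → Y) → B → Y → ℝ :=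
    fun g b y => if m g = 0 then ((Fintype.card Y : ℝ))⁻¹ else Bm g y b / m g with hrd_def
  have hqd0 : ∀ g a x, 0 ≤ qd g a x := by
    intro g a x
    simp only [hqd_def]
    by_cases hg : m g = 0
    · rw [if_pos hg]; positivity
    · rw [if_neg hg]; exact div_nonneg (hAm0 x g a) (hm0 g)
  have hqd1 : ∀ g a, (∑ x, qd g a x) = 1 := by
    intro g a
    simp only [hqd_def]
    by_cases hg : m g = 0
    · simp only [if_pos hg]
      rw [Finset.sum_const, Finset.card_univ, nsmul_eq_mul,
        mul_inv_cancel₀ (ne_of_gt hcardX)]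
    · simp only [if_neg hg]
      rw [← Finset.sum_div, hAm_sum, div_self hg]
  have hrd0 : ∀ g b y, 0 ≤ rd g b y := by
    intro g b y
    simp only [hrd_def]
    by_cases hg : m g = 0
    · rw [if_pos hg]; positivity
    · rw [if_neg hg]; exact div_nonneg (hBm0 g y b) (hm0 g)
  have hrd1 : ∀ g b, (∑ y, rd g b y) = 1 := by
    intro g b
    simp only [hrd_def]
    by_cases hg : m g = 0
    · simp only [if_pos hg]
      rw [Finset.sum_const, Finset.card_univ, nsmul_eq_mul,
        mul_inv_cancel₀ (ne_of_gt hcardY)]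
    · simp only [if_neg hg]
      rw [← Finset.sum_div, hBm_sum, div_self hg]
  have hprod : ∀ g a b x y, m g * qd g a x * rd g b y = Am x g a * Bm g y b / m g := by
    intro g a b x y
    by_cases hg : m g = 0
    · rw [hg, hAm_zero x g a hg]
      simp
    · simp only [hqd_def, hrd_def, if_neg hg]
      field_simp
  -- per-hidden-value total variation and KL pieces
  set T : (Fin k' → Y) → A → B → ℝ := fun g a b =>
    ∑ x, ∑ y, |P x (Fin.snoc g y) a (Fin.snoc brest b) - Am x g a * Bm g y b / m g|
    with hT_def
  set KL : (Fin k' → Y) → A → B → ℝ := fun g a b =>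
    ∑ x, ∑ y, P x (Fin.snoc g y) a (Fin.snoc brest b) *
      Real.log (P x (Fin.snoc g y) a (Fin.snoc brest b) * m g /
        (Am x g a * Bm g y b)) with hKL_def
  have hT0 : ∀ g a b, 0 ≤ T g a b := by
    intro g a b
    simp only [hT_def]
    exact Finset.sum_nonneg fun x _ => Finset.sum_nonneg fun y _ => abs_nonneg _
  have hTzero : ∀ g a b, m g = 0 → T g a b = 0 := by
    intro g a b hg
    simp only [hT_def]
    refine Finset.sum_eq_zero fun x _ => Finset.sum_eq_zero fun y _ => ?_
    rw [hPzero g x y a b hg, hAm_zero x g a hg]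
    simp
  have hKLzero : ∀ g a b, m g = 0 → KL g a b = 0 := by
    intro g a b hg
    simp only [hKL_def]
    refine Finset.sum_eq_zero fun x _ => Finset.sum_eq_zero fun y _ => ?_
    rw [hPzero g x y a b hg]
    simp
  -- per-hidden-value Pinsker
  have hpin : ∀ g a b, (T g a b)^2 ≤ 2 * m g * KL g a b := by
    intro g a b
    by_cases hg : m g = 0
    · rw [hTzero g a b hg, hKLzero g a b hg, hg]
      norm_num
    · have key := pinsker_sum (ι := X × Y)
        (fun p => P p.1 (Fin.snoc g p.2) a (Fin.snoc brest b))
        (fun p => Am p.1 g a * Bm g p.2 b / m g)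
        (fun p => hP0 _ _ _ _)
        (fun p => div_nonneg (mul_nonneg (hAm0 _ _ _) (hBm0 _ _ _)) (hm0 g))
        (by
          simp only [Fintype.sum_prod_type]
          rw [hm_eq g a b]
          have hrow : ∀ x : X, (∑ y, Am x g a * Bm g y b / m g) = Am x g a := by
            intro x
            rw [← Finset.sum_div, ← Finset.mul_sum, hBm_sum, mul_div_assoc,
              div_self hg, mul_one]
          rw [Finset.sum_congr rfl fun x _ => hrow x, hAm_sum])
        (by
          intro p hp
          rcases mul_eq_zero.mp ((div_eq_zero_iff.mp hp).resolve_right hg) with h | h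
          · exact le_antisymm (h ▸ hP_le_Am p.1 g p.2 a b) (hP0 _ _ _ _)
          · exact le_antisymm (h ▸ hP_le_Bm p.1 g p.2 a b) (hP0 _ _ _ _))
      simp only [Fintype.sum_prod_type, div_div_eq_mul_div] at key
      rw [hm_eq g a b] at key
      simp only [hT_def, hKL_def]
      exact key
  -- identification of the conditional mutual information
  have hcmi : ∀ a b, cmiLast (fun x yv => P x yv a (Fin.snoc brest b)) = ∑ g, KL g a b := by
    intro a b
    have step1 : ∀ x : X,
        (∑ yv : Fin (k'+1) → Y, P x yv a (Fin.snoc brest b) * Real.log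
          (P x yv a (Fin.snoc brest b) *
            (∑ x', ∑ c, P x' (Function.update yv (Fin.last k') c) a (Fin.snoc brest b)) /
            ((∑ c, P x (Function.update yv (Fin.last k') c) a (Fin.snoc brest b)) *
              (∑ x', P x' yv a (Fin.snoc brest b)))))
        = ∑ g : Fin k' → Y, ∑ y, P x (Fin.snoc g y) a (Fin.snoc brest b) *
            Real.log (P x (Fin.snoc g y) a (Fin.snoc brest b) * m g /
              (Am x g a * Bm g y b)) := by
      intro x
      rw [sum_snoc (fun yv => P x yv a (Fin.snoc brest b) * Real.log
          (P x yv a (Fin.snoc brest b) *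
            (∑ x', ∑ c, P x' (Function.update yv (Fin.last k') c) a (Fin.snoc brest b)) /
            ((∑ c, P x (Function.update yv (Fin.last k') c) a (Fin.snoc brest b)) *
              (∑ x', P x' yv a (Fin.snoc brest b)))))]
      refine Finset.sum_congr rfl fun g _ => Finset.sum_congr rfl fun y _ => ?_
      simp only [hupdY]
      rw [hm_eq g a b, hA_eq x g a b, hB_eq g y a b]
    calc cmiLast (fun x yv => P x yv a (Fin.snoc brest b))
        = ∑ x, ∑ g : Fin k' → Y, ∑ y, P x (Fin.snoc g y) a (Fin.snoc brest b) *
            Real.log (P x (Fin.snoc g y) a (Fin.snoc brest b) * m g /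
              (Am x g a * Bm g y b)) := by
          simp only [cmiLast]
          exact Finset.sum_congr rfl fun x _ => step1 x
      _ = ∑ g : Fin k' → Y, ∑ x, ∑ y, P x (Fin.snoc g y) a (Fin.snoc brest b) *
            Real.log (P x (Fin.snoc g y) a (Fin.snoc brest b) * m g /
              (Am x g a * Bm g y b)) := Finset.sum_comm
      _ = ∑ g, KL g a b := by simp only [hKL_def]
  -- summing the per-hidden-value Pinsker bounds (Cauchy-Schwarz over g)
  have hsumT : ∀ a b, (∑ g, T g a b)^2 ≤ 2 * ∑ g, KL g a b := by
    intro a b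
    have hCS := Finset.sum_mul_sq_le_sq_mul_sq Finset.univ
      (fun g : Fin k' → Y => Real.sqrt ((T g a b)^2 / (2 * m g)))
      (fun g : Fin k' → Y => Real.sqrt (2 * m g))
    have hfh : ∀ g : Fin k' → Y,
        Real.sqrt ((T g a b)^2 / (2 * m g)) * Real.sqrt (2 * m g) = T g a b := by
      intro g
      by_cases hg : m g = 0
      · rw [hTzero g a b hg, hg]
        norm_num
      · have hmpos : 0 < m g := (hm0 g).lt_of_ne (Ne.symm hg)
        rw [← Real.sqrt_mul (div_nonneg (sq_nonneg _) (by linarith)),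
          div_mul_cancel₀ _ (by positivity : (2:ℝ) * m g ≠ 0), Real.sqrt_sq (hT0 g a b)]
    have hs1 : ∀ g : Fin k' → Y,
        (Real.sqrt ((T g a b)^2 / (2 * m g)))^2 = (T g a b)^2 / (2 * m g) := fun g =>
      Real.sq_sqrt (div_nonneg (sq_nonneg _) (by linarith [hm0 g]))
    have hs2 : ∀ g : Fin k' → Y, (Real.sqrt (2 * m g))^2 = 2 * m g := fun g =>
      Real.sq_sqrt (by linarith [hm0 g])
    simp only [hfh, hs1, hs2] at hCS
    have h2m : (∑ g : Fin k' → Y, 2 * m g) = 2 := by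
      rw [← Finset.mul_sum, hmass, mul_one]
    rw [h2m] at hCS
    have hterm : ∀ g : Fin k' → Y, (T g a b)^2 / (2 * m g) ≤ KL g a b := by
      intro g
      by_cases hg : m g = 0
      · rw [hTzero g a b hg, hg]
        rw [hKLzero g a b hg]
        norm_num
      · have hmpos : 0 < m g := (hm0 g).lt_of_ne (Ne.symm hg)
        rw [div_le_iff₀ (by positivity)]
        calc (T g a b)^2 ≤ 2 * m g * KL g a b := hpin g a b
          _ = KL g a b * (2 * m g) := by ring
    calc (∑ g, T g a b)^2 ≤ (∑ g : Fin k' → Y, (T g a b)^2 / (2 * m g)) * 2 := hCS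
      _ ≤ (∑ g, KL g a b) * 2 :=
          mul_le_mul_of_nonneg_right (Finset.sum_le_sum fun g _ => hterm g) (by norm_num)
      _ = 2 * ∑ g, KL g a b := by ring
  -- Jensen (Cauchy-Schwarz) over a
  have hjensen : ∀ S : A → ℝ, (∑ a, μ a * S a)^2 ≤ ∑ a, μ a * (S a)^2 := by
    intro S
    have hCS := Finset.sum_mul_sq_le_sq_mul_sq Finset.univ
      (fun a => Real.sqrt (μ a)) (fun a => Real.sqrt (μ a) * S a)
    have h1 : ∀ a : A, Real.sqrt (μ a) * (Real.sqrt (μ a) * S a) = μ a * S a := by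
      intro a
      rw [← mul_assoc, Real.mul_self_sqrt (hμ0 a)]
    have h2 : ∀ a : A, (Real.sqrt (μ a))^2 = μ a := fun a => Real.sq_sqrt (hμ0 a)
    have h3 : ∀ a : A, (Real.sqrt (μ a) * S a)^2 = μ a * (S a)^2 := by
      intro a
      rw [mul_pow, h2]
    simp only [h1, h2, h3] at hCS
    rwa [hμ1, one_mul] at hCS
  -- the LHV model data
  set e : Fin (Fintype.card (Fin k' → Y)) ≃ (Fin k' → Y) :=
    (Fintype.equivFin (Fin k' → Y)).symm with he
  set w : Fin (Fintype.card (Fin k' → Y)) → ℝ := fun i => m (e i) with hw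
  set qq : Fin (Fintype.card (Fin k' → Y)) → A → X → ℝ := fun i a x => qd (e i) a x with hqq
  set rr : Fin (Fintype.card (Fin k' → Y)) → B → Y → ℝ := fun i b y => rd (e i) b y with hrr
  have hwqr : ∀ a b x y, (∑ i, w i * qq i a x * rr i b y)
      = ∑ g, Am x g a * Bm g y b / m g := by
    intro a b x y
    calc (∑ i, w i * qq i a x * rr i b y)
        = ∑ g, m g * qd g a x * rd g b y :=
          Equiv.sum_comp e (fun g => m g * qd g a x * rd g b y)
      _ = ∑ g, Am x g a * Bm g y b / m g :=
          Finset.sum_congr rfl fun g _ => hprod g a b x y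
  set Dfun : B → ℝ := fun b => ∑ a, μ a * ∑ x, ∑ y,
      |margLast P brest x y a b - ∑ i, w i * qq i a x * rr i b y| with hDfun
  set Efun : B → ℝ := fun b => ∑ a, μ a *
      cmiLast (fun x yv => P x yv a (Fin.snoc brest b)) with hEfun
  -- the distance bound
  have hdist : ∀ b, Dfun b ≤ ∑ a, μ a * ∑ g, T g a b := by
    intro b
    simp only [hDfun]
    refine Finset.sum_le_sum fun a _ => mul_le_mul_of_nonneg_left ?_ (hμ0 a)
    have h1 : ∀ x y, |margLast P brest x y a b - ∑ i, w i * qq i a x * rr i b y|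
        ≤ ∑ g, |P x (Fin.snoc g y) a (Fin.snoc brest b) - Am x g a * Bm g y b / m g| := by
      intro x y
      rw [hwqr a b x y]
      simp only [margLast]
      rw [← Finset.sum_sub_distrib]
      exact Finset.abs_sum_le_sum_abs _ _
    calc (∑ x, ∑ y, |margLast P brest x y a b - ∑ i, w i * qq i a x * rr i b y|)
        ≤ ∑ x, ∑ y, ∑ g,
            |P x (Fin.snoc g y) a (Fin.snoc brest b) - Am x g a * Bm g y b / m g| :=
          Finset.sum_le_sum fun x _ => Finset.sum_le_sum fun y _ => h1 x y
      _ = ∑ x, ∑ g : Fin k' → Y, ∑ y,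
            |P x (Fin.snoc g y) a (Fin.snoc brest b) - Am x g a * Bm g y b / m g| :=
          Finset.sum_congr rfl fun x _ => Finset.sum_comm
      _ = ∑ g : Fin k' → Y, ∑ x, ∑ y,
            |P x (Fin.snoc g y) a (Fin.snoc brest b) - Am x g a * Bm g y b / m g| :=
          Finset.sum_comm
      _ = ∑ g, T g a b := by simp only [hT_def]
  -- main estimate for each b
  have hmain : ∀ b, (∑ a, μ a * ∑ g, T g a b)^2 ≤ 2 * Efun b := by
    intro b
    calc (∑ a, μ a * ∑ g, T g a b)^2
        ≤ ∑ a, μ a * (∑ g, T g a b)^2 := hjensen _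
      _ ≤ ∑ a, μ a * (2 * ∑ g, KL g a b) :=
          Finset.sum_le_sum fun a _ => mul_le_mul_of_nonneg_left (hsumT a b) (hμ0 a)
      _ = 2 * ∑ a, μ a * ∑ g, KL g a b := by
          rw [Finset.mul_sum]
          exact Finset.sum_congr rfl fun a _ => by ring
      _ = 2 * Efun b := by
          simp only [hEfun]
          congr 1
          exact Finset.sum_congr rfl fun a _ => by rw [hcmi a b]
  -- membership of the constructed LHV model
  have hmem : (⨆ b, Dfun b) ∈ Sset := by
    rw [hSset]
    refine ⟨Fintype.card (Fin k' → Y), w, qq, rr, ?_, ?_, ?_, ?_, ?_, ?_, ?_⟩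
    · intro i
      simp only [hw]
      exact hm0 _
    · simp only [hw]
      rw [Equiv.sum_comp e m, hmass]
    · intro i a x
      simp only [hqq]
      exact hqd0 _ _ _
    · intro i a
      simp only [hqq]
      exact hqd1 _ _
    · intro i b y
      simp only [hrr]
      exact hrd0 _ _ _
    · intro i b
      simp only [hrr]
      exact hrd1 _ _
    · simp only [hDfun]
  have hlb : ∀ t ∈ Sset, (0:ℝ) ≤ t := by
    rw [hSset]
    rintro t ⟨N', w', q', r', -, -, -, -, -, -, rfl⟩
    have h0 : (0:ℝ) ≤ ∑ a, μ a * ∑ x, ∑ y,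
        |margLast P brest x y a b₀ - ∑ i, w' i * q' i a x * r' i b₀ y| :=
      Finset.sum_nonneg fun a _ => mul_nonneg (hμ0 a)
        (Finset.sum_nonneg fun x _ => Finset.sum_nonneg fun y _ => abs_nonneg _)
    exact h0.trans (le_ciSup (f := fun b : B => ∑ a, μ a * ∑ x, ∑ y,
      |margLast P brest x y a b - ∑ i, w' i * q' i a x * r' i b y|)
      (Set.Finite.bddAbove (Set.finite_range _)) b₀)
  have hinf_le : sInf Sset ≤ ⨆ b, Dfun b := csInf_le ⟨0, fun t ht => hlb t ht⟩ hmem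
  have hinf0 : 0 ≤ sInf Sset := le_csInf ⟨_, hmem⟩ hlb
  obtain ⟨bs, hbs⟩ := Finite.exists_max Dfun
  have hsup_eq : (⨆ b, Dfun b) = Dfun bs :=
    le_antisymm (ciSup_le hbs) (le_ciSup (Set.Finite.bddAbove (Set.finite_range Dfun)) bs)
  have hST : 0 ≤ ∑ a, μ a * ∑ g, T g a bs :=
    Finset.sum_nonneg fun a _ => mul_nonneg (hμ0 a)
      (Finset.sum_nonneg fun g _ => hT0 g a bs)
  have hgoal : (1/2) * (sInf Sset)^2 ≤ Efun bs := by
    have h1 : sInf Sset ≤ Dfun bs := hinf_le.trans_eq hsup_eq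
    have h2 : Dfun bs ≤ ∑ a, μ a * ∑ g, T g a bs := hdist bs
    have h3 : (sInf Sset)^2 ≤ (∑ a, μ a * ∑ g, T g a bs)^2 :=
      pow_le_pow_left₀ hinf0 (h1.trans h2) 2
    have h4 := hmain bs
    linarith
  exact hgoal.trans (le_ciSup (Set.Finite.bddAbove (Set.finite_range Efun)) bs)

end
end

section
/- For every n ≥ 1 and k ≥ 1, the state ρ = (1/k)·Φ_n + (1 − 1/k)·(I/n ⊗ I/n) on ℂⁿ ⊗ ℂⁿ, where Φ_n = (1/n) Σ_{i,j=1}^n |ii⟩⟨jj| is the projector onto the n-dimensional maximally entangled state and I/n is the maximally mixed state on ℂⁿ, is k-extendible. -/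
/- The isotropic state ρ = (1/k)Φ_n + (1−1/k)(I/n ⊗ I/n) on ℂⁿ ⊗ ℂⁿ is k-extendible. -/

open Kronecker
open scoped ComplexOrder BigOperators

noncomputable section

/-- A quantum state: positive semidefinite matrix of unit trace. -/
def IsState {n : Type*} [Fintype n] [DecidableEq n] (ρ : Matrix n n ℂ) : Prop :=
  ρ.PosSemidef ∧ ρ.trace = 1

/-- The reduced state on A and the j-th B factor of a state on A ⊗ B^{⊗k}. -/
def reduceAB {a b : Type*} [Fintype a] [Fintype b] [DecidableEq b] {k : ℕ}
    (ρ : Matrix (a × (Fin k → b)) (a × (Fin k → b)) ℂ) (j : Fin k) :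
    Matrix (a × b) (a × b) ℂ :=
  Matrix.of fun p q => ∑ f : {i : Fin k // i ≠ j} → b,
    ρ (p.1, fun i => if h : i = j then p.2 else f ⟨i, h⟩)
      (q.1, fun i => if h : i = j then q.2 else f ⟨i, h⟩)

/-- A state ρ^{AB} is k-extendible if there is a state ρ̃ on A ⊗ B^{⊗k} with
    ρ̃^{AB_j} = ρ^{AB} for every j ∈ [k]. -/
def IsExtendible {a b : Type*} [Fintype a] [DecidableEq a] [Fintype b] [DecidableEq b]
    (k : ℕ) (ρ : Matrix (a × b) (a × b) ℂ) : Prop :=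
  ∃ ρ' : Matrix (a × (Fin k → b)) (a × (Fin k → b)) ℂ,
    IsState ρ' ∧ ∀ j : Fin k, reduceAB ρ' j = ρ

/-- The projector Φ_n = (1/n) Σ_{i,j} |ii⟩⟨jj| onto the n-dimensional maximally
    entangled state. -/
def maxEntProj (n : ℕ) : Matrix (Fin n × Fin n) (Fin n × Fin n) ℂ :=
  Matrix.of fun p q => if p.1 = p.2 ∧ q.1 = q.2 then (n : ℂ)⁻¹ else 0

namespace IsoExt

open Matrix

variable (n k : ℕ)

/-- Restriction of a function to indices different from `j`. -/
def res (j : Fin k) (f : Fin k → Fin n) : {i : Fin k // i ≠ j} → Fin n := fun i => f i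

/-- Insertion of a value at index `j`. -/
def ins (j : Fin k) (x : Fin n) (f : {i : Fin k // i ≠ j} → Fin n) : Fin k → Fin n :=
  fun i => if h : i = j then x else f ⟨i, h⟩

@[simp] lemma ins_same (j : Fin k) (x : Fin n) (f : {i : Fin k // i ≠ j} → Fin n) :
    ins n k j x f j = x := dif_pos rfl

lemma ins_other (j : Fin k) (x : Fin n) (f : {i : Fin k // i ≠ j} → Fin n)
    {i : Fin k} (h : i ≠ j) : ins n k j x f i = f ⟨i, h⟩ := dif_neg h

@[simp] lemma res_ins (j : Fin k) (x : Fin n) (f : {i : Fin k // i ≠ j} → Fin n) :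
    res n k j (ins n k j x f) = f := funext fun i => dif_neg i.2

/-- Gram factor of the `j`-th term of the extension. -/
def gram (j : Fin k) :
    Matrix ({i : Fin k // i ≠ j} → Fin n) (Fin n × (Fin k → Fin n)) ℂ :=
  Matrix.of fun g p => if p.1 = p.2 j ∧ res n k j p.2 = g then 1 else 0

/-- The `j`-th term of the extension: (unnormalized) Φ on A B_j, identity elsewhere. -/
def Mj (j : Fin k) : Matrix (Fin n × (Fin k → Fin n)) (Fin n × (Fin k → Fin n)) ℂ :=
  (gram n k j)ᴴ * gram n k j

lemma Mj_posSemidef (j : Fin k) : (Mj n k j).PosSemidef :=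
  Matrix.posSemidef_conjTranspose_mul_self _

lemma Mj_apply (j : Fin k) (p q : Fin n × (Fin k → Fin n)) :
    Mj n k j p q =
      if p.1 = p.2 j ∧ q.1 = q.2 j ∧ res n k j p.2 = res n k j q.2 then 1 else 0 := by
  classical
  rw [Mj, Matrix.mul_apply]
  have h1 : ∀ g, (gram n k j)ᴴ p g * gram n k j g q
      = if (p.1 = p.2 j ∧ res n k j p.2 = g) ∧ (q.1 = q.2 j ∧ res n k j q.2 = g)
          then 1 else 0 := by
    intro g
    simp only [Matrix.conjTranspose_apply, gram, Matrix.of_apply]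
    split_ifs with h h' h'' <;> simp_all
  simp only [h1]
  by_cases h : p.1 = p.2 j ∧ q.1 = q.2 j ∧ res n k j p.2 = res n k j q.2
  · rw [if_pos h, Finset.sum_eq_single (res n k j p.2)]
    · rw [if_pos ⟨⟨h.1, rfl⟩, h.2.1, h.2.2.symm⟩]
    · intro g _ hg; rw [if_neg]; rintro ⟨⟨-, rfl⟩, -⟩; exact hg rfl
    · intro hmem; exact absurd (Finset.mem_univ _) hmem
  · rw [if_neg h, Finset.sum_eq_zero]
    intro g _; rw [if_neg]; rintro ⟨⟨hp1, rfl⟩, hq1, hg⟩; exact h ⟨hp1, hq1, hg.symm⟩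

lemma card_ne (j : Fin k) : Fintype.card {i : Fin k // i ≠ j} = k - 1 := by
  simp [Fintype.card_subtype_compl]

lemma Mj_trace (j : Fin k) : (Mj n k j).trace = (n : ℂ) ^ k := by
  classical
  rw [Matrix.trace]
  simp only [Matrix.diag, Mj_apply, and_self, and_true]
  rw [Fintype.sum_prod_type, Finset.sum_comm]
  have h1 : ∀ f : Fin k → Fin n, (∑ a : Fin n, if a = f j then (1:ℂ) else 0) = 1 := by
    intro f; simp
  simp only [h1]
  simp [Finset.card_univ]

/-- The reduction of `Mj j` on the pair `(A, B_j)`. -/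
lemma reduce_same (j : Fin k) :
    reduceAB (Mj n k j) j
      = Matrix.of fun p q => if p.1 = p.2 ∧ q.1 = q.2 then ((n:ℂ)^(k-1)) else 0 := by
  classical
  funext p q
  show (∑ f : {i : Fin k // i ≠ j} → Fin n,
      Mj n k j (p.1, ins n k j p.2 f) (q.1, ins n k j q.2 f)) = _
  simp only [Mj_apply, ins_same, res_ins]
  simp only [and_true, Finset.sum_const, Finset.card_univ, Fintype.card_fun,
    Fintype.card_fin, card_ne, nsmul_eq_mul, Matrix.of_apply]
  push_cast
  split_ifs <;> simp

/-- The reduction of `Mj j` on the pair `(A, B_j')` for `j ≠ j'`. -/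
lemma reduce_other (j j' : Fin k) (hjj : j ≠ j') :
    reduceAB (Mj n k j) j'
      = Matrix.of fun p q => if p.1 = q.1 ∧ p.2 = q.2 then ((n:ℂ)^(k-2)) else 0 := by
  classical
  funext p q
  show (∑ f : {i : Fin k // i ≠ j'} → Fin n,
      Mj n k j (p.1, ins n k j' p.2 f) (q.1, ins n k j' q.2 f)) = _
  simp only [Mj_apply]
  have key : ∀ f : {i : Fin k // i ≠ j'} → Fin n,
      (if p.1 = ins n k j' p.2 f j ∧ q.1 = ins n k j' q.2 f j ∧
        res n k j (ins n k j' p.2 f) = res n k j (ins n k j' q.2 f) then (1:ℂ) else 0)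
      = if f ⟨j, hjj⟩ = p.1 ∧ (p.1 = q.1 ∧ p.2 = q.2) then 1 else 0 := by
    intro f
    apply if_congr _ rfl rfl
    rw [ins_other n k j' p.2 f hjj, ins_other n k j' q.2 f hjj]
    constructor
    · rintro ⟨h1, h2, h3⟩
      have h4 := congrFun h3 ⟨j', Ne.symm hjj⟩
      simp only [res, ins_same] at h4
      exact ⟨h1.symm, h1.trans h2.symm, h4⟩
    · rintro ⟨h1, h2, h3⟩
      refine ⟨h1.symm, h2.symm.trans h1.symm, ?_⟩
      rw [h3]
  simp only [key]
  rw [← Equiv.sum_comp (Equiv.funSplitAt (⟨j, hjj⟩ : {i : Fin k // i ≠ j'}) (Fin n)).symm]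
  rw [Fintype.sum_prod_type]
  have hz : ∀ (x : Fin n) (g : {w : {i : Fin k // i ≠ j'} // w ≠ ⟨j, hjj⟩} → Fin n),
      (Equiv.funSplitAt (⟨j, hjj⟩ : {i : Fin k // i ≠ j'}) (Fin n)).symm (x, g) ⟨j, hjj⟩
        = x := by
    intro x g
    simp [Equiv.funSplitAt]
  simp only [hz]
  rw [Finset.sum_comm]
  have card2 : Fintype.card ({w : {i : Fin k // i ≠ j'} // w ≠ ⟨j, hjj⟩} → Fin n)
      = n^(k-2) := by
    rw [Fintype.card_fun, Fintype.card_fin]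
    congr 1
    simp [Fintype.card_subtype_compl, Fintype.card_subtype_compl (p := fun i : Fin k => i = j')]
    omega
  have inner : (∑ x : Fin n, if x = p.1 ∧ (p.1 = q.1 ∧ p.2 = q.2) then (1:ℂ) else 0)
      = if p.1 = q.1 ∧ p.2 = q.2 then 1 else 0 := by
    simp [ite_and]
  simp only [Finset.sum_const, inner, smul_ite, smul_eq_mul, mul_one, mul_zero, smul_zero]
  rw [Finset.card_univ, card2, Matrix.of_apply]
  split_ifs <;> simp

lemma reduceAB_smul {a b : Type*} [Fintype a] [Fintype b] [DecidableEq b] {k : ℕ}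
    (c : ℂ) (ρ : Matrix (a × (Fin k → b)) (a × (Fin k → b)) ℂ) (j : Fin k) :
    reduceAB (c • ρ) j = c • reduceAB ρ j := by
  funext p q
  simp [reduceAB, Finset.mul_sum]

lemma reduceAB_sum {a b : Type*} [Fintype a] [Fintype b] [DecidableEq b] {k : ℕ}
    {ι : Type*} (s : Finset ι)
    (ρ : ι → Matrix (a × (Fin k → b)) (a × (Fin k → b)) ℂ) (j : Fin k) :
    reduceAB (∑ i ∈ s, ρ i) j = ∑ i ∈ s, reduceAB (ρ i) j := by
  funext p q
  simp only [reduceAB, Matrix.of_apply, Matrix.sum_apply]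
  exact Finset.sum_comm

lemma smul_posSemidef {m : Type*} [Fintype m] {M : Matrix m m ℂ} (hM : M.PosSemidef)
    {c : ℂ} (hc : 0 ≤ c) : (c • M).PosSemidef := by
  have him : c.im = 0 := by
    have := (Complex.le_def.mp hc).2
    simpa using this.symm
  have hstar : star c = c := by
    apply Complex.ext <;> simp [him]
  constructor
  · rw [Matrix.IsHermitian, Matrix.conjTranspose_smul, hstar, hM.isHermitian.eq]
  · intro x
    have h := mul_nonneg hc (hM.2 x)
    convert h using 1
    simp only [Matrix.smul_apply, smul_eq_mul, Finsupp.sum, Finset.mul_sum]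
    refine Finset.sum_congr rfl fun i _ => Finset.sum_congr rfl fun j _ => by ring

end IsoExt

open IsoExt Matrix

theorem isotropic_state_extendible (n k : ℕ) (hn : 1 ≤ n) (hk : 1 ≤ k) :
    IsExtendible k
      ((k : ℂ)⁻¹ • maxEntProj n +
        (1 - (k : ℂ)⁻¹) •
          (((n : ℂ)⁻¹ • (1 : Matrix (Fin n) (Fin n) ℂ)) ⊗ₖ
            ((n : ℂ)⁻¹ • (1 : Matrix (Fin n) (Fin n) ℂ)))) := by
  classical
  have hnc : (n : ℂ) ≠ 0 := Nat.cast_ne_zero.mpr (by omega)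
  have hkc : (k : ℂ) ≠ 0 := Nat.cast_ne_zero.mpr (by omega)
  set c : ℂ := ((k : ℂ) * (n : ℂ) ^ k)⁻¹ with hc_def
  refine ⟨c • ∑ j : Fin k, Mj n k j, ⟨⟨?_, ?_⟩, ?_⟩⟩
  · -- positive semidefinite
    have hc0 : (0 : ℂ) ≤ c := by
      rw [hc_def, show ((k : ℂ) * (n : ℂ) ^ k) = ((((k * n ^ k : ℕ) : ℝ)) : ℂ) by
        push_cast; ring, ← Complex.ofReal_inv]
      exact Complex.zero_le_real.mpr (inv_nonneg.mpr (Nat.cast_nonneg _))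
    refine smul_posSemidef ?_ hc0
    refine Finset.sum_induction _ _ (fun a b ha hb => ha.add hb) Matrix.PosSemidef.zero ?_
    exact fun j _ => Mj_posSemidef n k j
  · -- trace one
    rw [Matrix.trace_smul, Matrix.trace_sum]
    simp only [Mj_trace]
    rw [Finset.sum_const, Finset.card_univ, Fintype.card_fin, nsmul_eq_mul, smul_eq_mul]
    rw [hc_def]
    field_simp
  · -- reductions
    intro j'
    rw [reduceAB_smul, reduceAB_sum]
    rw [← Finset.add_sum_erase _ _ (Finset.mem_univ j')]
    rw [reduce_same]
    have hother : ∀ j ∈ Finset.univ.erase j', reduceAB (Mj n k j) j'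
        = Matrix.of fun p q =>
            if p.1 = q.1 ∧ p.2 = q.2 then ((n:ℂ)^(k-2)) else 0 := by
      intro j hj
      exact reduce_other n k j j' (Finset.ne_of_mem_erase hj)
    rw [Finset.sum_congr rfl hother, Finset.sum_const, Finset.card_erase_of_mem
      (Finset.mem_univ j'), Finset.card_univ, Fintype.card_fin,
      ← Nat.cast_smul_eq_nsmul ℂ]
    -- now entrywise
    funext p q
    simp only [Matrix.smul_apply, Matrix.add_apply, Matrix.of_apply, smul_eq_mul,
      maxEntProj, Matrix.kroneckerMap_apply, Matrix.one_apply,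
      mul_ite, mul_zero, mul_one, ite_mul, zero_mul]
    have coef1 : c * (n : ℂ) ^ (k - 1) = (k : ℂ)⁻¹ * (n : ℂ)⁻¹ := by
      have e1 : (n : ℂ) ^ k = (n : ℂ) ^ (k - 1) * n := by
        rw [← pow_succ]; congr 1; omega
      rw [hc_def, e1]
      field_simp
    have coef2 : c * (((k - 1 : ℕ) : ℂ) * (n : ℂ) ^ (k - 2))
        = (1 - (k : ℂ)⁻¹) * ((n : ℂ)⁻¹ * (n : ℂ)⁻¹) := by
      rcases eq_or_lt_of_le hk with hk1 | hk2
      · rw [hc_def, ← hk1]; norm_num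
      · have e2 : (n : ℂ) ^ k = (n : ℂ) ^ (k - 2) * ((n : ℂ) * (n : ℂ)) := by
          rw [← pow_two, ← pow_add]; congr 1; omega
        have hcast : ((k - 1 : ℕ) : ℂ) = (k : ℂ) - 1 := by
          push_cast [Nat.cast_sub hk]; ring
        have hp : (n : ℂ) ^ (k - 2) ≠ 0 := pow_ne_zero _ hnc
        rw [hc_def, e2, hcast]
        field_simp
    rw [hc_def] at coef1 coef2
    split_ifs <;>
      first
        | (exfalso; tauto)
        | linear_combination coef1 + coef2
        | linear_combination coef1
        | linear_combination coef2
        | ring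
end
end
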